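/- arXiv:1107.4542 — 6 statements merged into one kernel-verified Lean document; each statement's English description precedes it below -/
import Mathlib

section
/- Let (a_m)_{m≥1} ⊆ ℂ be an ℓ¹-sequence with |a_m| ≤ 1/2 for every m ≥ 1. Set A = Σ_{m≥1} a_m, B = Σ_{m≥1} |a_m|², and S = Σ_{m≥1} |a_m|. Then |Π_{m≥1}(1+a_m) − 1| ≤ |A| e^S + B e^{S+S²}. -/
/-!
Since `|a_m| ≤ 1/2`, the product equals `e^L` with `L = Σ log(1 + a_m)`, and
`|log(1 + z) - z| ≤ |z|²` gives `|L - A| ≤ B ≤ S²`. Splitting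
`e^L - 1 = e^A (e^{L - A} - 1) + (e^A - 1)` and using `|e^w - 1| ≤ |w| e^{|w|}` on both
pieces yields the bound.
-/

open Complex

namespace Complex

lemma norm_exp_sub_one_le_norm_mul_exp (w : ℂ) : ‖exp w - 1‖ ≤ ‖w‖ * Real.exp ‖w‖ := by
  simpa using norm_exp_sub_sum_le_norm_mul_exp w 1

lemma norm_exp_sub_one_le_of_approx (A L : ℂ) :
    ‖exp L - 1‖ ≤ ‖A‖ * Real.exp ‖A‖ + ‖L - A‖ * Real.exp (‖A‖ + ‖L - A‖) := by
  have hsplit : exp L - 1 = exp A * (exp (L - A) - 1) + (exp A - 1) := by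
    rw [mul_sub, ← exp_add, add_sub_cancel]
    ring
  have hexpA : ‖exp A‖ ≤ Real.exp ‖A‖ := by
    rw [norm_exp]
    exact Real.exp_le_exp.mpr (re_le_norm A)
  calc ‖exp L - 1‖ ≤ ‖exp A‖ * ‖exp (L - A) - 1‖ + ‖exp A - 1‖ := by
        rw [hsplit, ← norm_mul]
        exact norm_add_le _ _
    _ ≤ Real.exp ‖A‖ * (‖L - A‖ * Real.exp ‖L - A‖) + ‖A‖ * Real.exp ‖A‖ := by
        gcongr <;> exact norm_exp_sub_one_le_norm_mul_exp _
    _ = ‖A‖ * Real.exp ‖A‖ + ‖L - A‖ * Real.exp (‖A‖ + ‖L - A‖) := by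
        rw [Real.exp_add]
        ring

lemma norm_log_one_add_sub_self_le_sq {z : ℂ} (hz : ‖z‖ ≤ 1 / 2) :
    ‖log (1 + z) - z‖ ≤ ‖z‖ ^ 2 := by
  have hinv : (1 - ‖z‖)⁻¹ ≤ 2 := by
    rw [inv_le_comm₀ (by linarith) two_pos]
    linarith
  calc ‖log (1 + z) - z‖ ≤ ‖z‖ ^ 2 * (1 - ‖z‖)⁻¹ / 2 :=
        norm_log_one_add_sub_self_le (hz.trans_lt one_half_lt_one)
    _ ≤ ‖z‖ ^ 2 * 2 / 2 := by gcongr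
    _ = ‖z‖ ^ 2 := by ring

lemma one_add_ne_zero_of_norm_le_half {z : ℂ} (hz : ‖z‖ ≤ 1 / 2) : 1 + z ≠ 0 := by
  intro h
  rw [eq_neg_of_add_eq_zero_right h] at hz
  norm_num at hz

end Complex

lemma tsum_sq_le_sq_tsum {ι : Type*} {f : ι → ℝ} (hf0 : ∀ i, 0 ≤ f i) (hf : Summable f) :
    ∑' i, f i ^ 2 ≤ (∑' i, f i) ^ 2 := by
  have hle : ∀ i, f i ^ 2 ≤ f i * ∑' j, f j := fun i => by
    rw [sq]
    exact mul_le_mul_of_nonneg_left (hf.le_tsum i fun j _ => hf0 j) (hf0 i)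
  have hsq : Summable fun i => f i ^ 2 :=
    (hf.mul_right _).of_nonneg_of_le (fun i => sq_nonneg _) hle
  calc ∑' i, f i ^ 2 ≤ ∑' i, f i * ∑' j, f j := hsq.tsum_le_tsum hle (hf.mul_right _)
    _ = (∑' i, f i) ^ 2 := by rw [tsum_mul_right, sq]

lemma norm_tsum_log_one_add_sub_tsum_le {ι : Type*} {a : ι → ℂ}
    (ha : Summable fun i => ‖a i‖) (hhalf : ∀ i, ‖a i‖ ≤ 1 / 2) :
    ‖∑' i, log (1 + a i) - ∑' i, a i‖ ≤ ∑' i, ‖a i‖ ^ 2 := by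
  have hlog : Summable fun i => log (1 + a i) := summable_log_one_add_of_summable ha.of_norm
  have hsq : Summable fun i => ‖a i‖ ^ 2 :=
    ha.of_nonneg_of_le (fun i => sq_nonneg _) fun i => by
      nlinarith [norm_nonneg (a i), hhalf i]
  have hdiff : Summable fun i => ‖log (1 + a i) - a i‖ :=
    hsq.of_nonneg_of_le (fun i => norm_nonneg _) fun i =>
      norm_log_one_add_sub_self_le_sq (hhalf i)
  rw [← hlog.tsum_sub ha.of_norm]
  calc ‖∑' i, (log (1 + a i) - a i)‖ ≤ ∑' i, ‖log (1 + a i) - a i‖ := norm_tsum_le_tsum_norm hdiff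
    _ ≤ ∑' i, ‖a i‖ ^ 2 :=
        hdiff.tsum_le_tsum (fun i => norm_log_one_add_sub_self_le_sq (hhalf i)) hsq

/-- For an `ℓ¹`-sequence `(a_m)` with `|a_m| ≤ 1/2`, with `A = Σ a_m`, `B = Σ |a_m|²`,
`S = Σ |a_m|`, one has `|Π (1 + a_m) - 1| ≤ |A| e^S + B e^{S + S²}`. -/
theorem abs_prod_one_add_sub_one_le (a : ℕ+ → ℂ)
    (ha : Summable fun m => ‖a m‖)
    (hhalf : ∀ m, ‖a m‖ ≤ 1 / 2) :
    ‖(∏' m, (1 + a m)) - 1‖ ≤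
      ‖∑' m, a m‖ * Real.exp (∑' m, ‖a m‖) +
        (∑' m, (‖a m‖) ^ 2) *
          Real.exp ((∑' m, ‖a m‖) + (∑' m, ‖a m‖) ^ 2) := by
  rw [← cexp_tsum_eq_tprod (fun m => one_add_ne_zero_of_norm_le_half (hhalf m))
    (summable_log_one_add_of_summable ha.of_norm)]
  have hA : ‖∑' m, a m‖ ≤ ∑' m, ‖a m‖ := norm_tsum_le_tsum_norm ha
  have hR := norm_tsum_log_one_add_sub_tsum_le ha hhalf
  have hBS : ∑' m, ‖a m‖ ^ 2 ≤ (∑' m, ‖a m‖) ^ 2 :=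
    tsum_sq_le_sq_tsum (fun m => norm_nonneg _) ha
  refine (norm_exp_sub_one_le_of_approx (∑' m, a m) _).trans ?_
  gcongr
  exact hR.trans hBS
end

section
/- The discrete Hilbert transform H, defined on sequences α = (α_m)_{m≥1} ∈ ℓ²(ℕ,ℂ) by (Hα)_n = Σ_{m≠n} α_m (1/(n−m) + 1/(n+m)), is a bounded linear operator on ℓ²(ℕ,ℂ) with operator norm at most 2π. -/
/-!
Up to the factor `(2πi)⁻¹`, the kernel `(n - m)⁻¹ + (n + m)⁻¹` is a pair of Fourier coefficients
of the sawtooth `π - θ` on `[0, 2π]`. So on finite sections the bilinear form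
`∑ b_n K_{nm} a_m` is `(2πi)⁻¹ ∫ (π - θ) g f` with `g = ∑ b_n e^{inθ}` and
`f = ∑ a_m (e^{-imθ} + e^{imθ})`; as `|π - θ| ≤ π`, Cauchy–Schwarz and Parseval bound it by
`√2 π ‖a‖ ‖b‖`. Removing the diagonal term `(2n)⁻¹`, excluded from the sum by `m ≠ n`, costs at
most `1/2`, and `√2 π + 1/2 ≤ 2π`. A bilinear bound on all finite sections of a matrix makes its
row sums converge and define an operator on `ℓ²` of at most that norm.
-/

open scoped Real ComplexConjugate ENNReal
open Complex intervalIntegral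

theorem le_sq_of_le_mul_sqrt {x c : ℝ} (hx : 0 ≤ x) (h : x ≤ c * √x) : x ≤ c ^ 2 := by
  have hs := Real.sq_sqrt hx
  nlinarith [sq_nonneg (c - √x), Real.sqrt_nonneg x]

theorem sqrt_sum_norm_sq_le_norm {ι : Type*} (α : lp (fun _ : ι => ℂ) 2) (G : Finset ι) :
    √(∑ m ∈ G, ‖α m‖ ^ 2) ≤ ‖α‖ := by
  refine Real.sqrt_le_iff.2 ⟨norm_nonneg α, ?_⟩
  simpa using lp.sum_rpow_le_norm_rpow (by norm_num : 0 < (2 : ℝ≥0∞).toReal) α G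

section BilinearBound

variable {ι : Type*}

def HasBilinearBound (K : ι → ι → ℂ) (C : ℝ) : Prop :=
  ∀ (F G : Finset ι) (a b : ι → ℂ),
    ‖∑ n ∈ F, ∑ m ∈ G, b n * K n m * a m‖ ≤ C * √(∑ m ∈ G, ‖a m‖ ^ 2) * √(∑ n ∈ F, ‖b n‖ ^ 2)

namespace HasBilinearBound

variable {K L : ι → ι → ℂ} {C D : ℝ}

theorem sub (hK : HasBilinearBound K C) (hL : HasBilinearBound L D) :
    HasBilinearBound (K - L) (C + D) := by
  intro F G a b
  have hsplit : ∑ n ∈ F, ∑ m ∈ G, b n * (K - L) n m * a m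
      = ∑ n ∈ F, ∑ m ∈ G, b n * K n m * a m - ∑ n ∈ F, ∑ m ∈ G, b n * L n m * a m := by
    simp only [Pi.sub_apply, mul_sub, sub_mul, Finset.sum_sub_distrib]
  rw [hsplit, add_mul, add_mul]
  exact (norm_sub_le _ _).trans (add_le_add (hK F G a b) (hL F G a b))

theorem sum_norm_sq_row_le (hK : HasBilinearBound K C) (n : ι) (G : Finset ι) :
    ∑ m ∈ G, ‖K n m‖ ^ 2 ≤ C ^ 2 := by
  have h := hK {n} G (fun m => conj (K n m)) 1
  simp only [Finset.sum_singleton, Pi.one_apply, one_mul, norm_one, one_pow, Real.sqrt_one,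
    mul_one, RCLike.norm_conj, Complex.mul_conj, Complex.normSq_eq_norm_sq] at h
  norm_cast at h
  rw [Real.norm_of_nonneg (by positivity)] at h
  exact le_sq_of_le_mul_sqrt (by positivity) h

theorem summable_row_mul (hK : HasBilinearBound K C) (n : ι) (α : lp (fun _ : ι => ℂ) 2) :
    Summable fun m => K n m * α m := by
  have hα : Summable fun m => ‖α m‖ ^ 2 := by
    simpa using (lp.memℓp α).summable (by norm_num : 0 < (2 : ℝ≥0∞).toReal)
  have hrow : Summable fun m => ‖K n m‖ ^ 2 :=
    summable_of_sum_le (fun _ => by positivity) (hK.sum_norm_sq_row_le n)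
  refine Summable.of_norm_bounded ((hrow.add hα).div_const 2) fun m => ?_
  rw [norm_mul]
  nlinarith [sq_nonneg (‖K n m‖ - ‖α m‖)]

theorem sum_norm_sq_tsum_le (hK : HasBilinearBound K C) (hC : 0 ≤ C)
    (α : lp (fun _ : ι => ℂ) 2) (F : Finset ι) :
    ∑ n ∈ F, ‖∑' m, K n m * α m‖ ^ 2 ≤ (C * ‖α‖) ^ 2 := by
  set T : ι → ℂ := fun n => ∑' m, K n m * α m
  set S := ∑ n ∈ F, ‖T n‖ ^ 2
  have hS : ∑ n ∈ F, conj (T n) * T n = (S : ℂ) := by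
    simp only [S, Complex.ofReal_sum, Complex.ofReal_pow, Complex.conj_mul']
  have hsum : HasSum (fun m => ∑ n ∈ F, conj (T n) * K n m * α m) (S : ℂ) := by
    rw [← hS]
    exact hasSum_sum fun n _ => by
      simpa only [mul_assoc] using (hK.summable_row_mul n α).hasSum.mul_left (conj (T n))
  have hpartial (G : Finset ι) :
      ‖∑ m ∈ G, ∑ n ∈ F, conj (T n) * K n m * α m‖ ≤ C * ‖α‖ * √S := by
    rw [Finset.sum_comm]
    refine (hK F G α fun n => conj (T n)).trans ?_
    simp only [RCLike.norm_conj]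
    gcongr
    exact sqrt_sum_norm_sq_le_norm α G
  have hS_le : S ≤ C * ‖α‖ * √S := by
    simpa [Complex.norm_real, Real.norm_of_nonneg (by positivity : 0 ≤ S)]
      using le_of_tendsto' hsum.norm hpartial
  exact le_sq_of_le_mul_sqrt (by positivity) hS_le

theorem exists_clm (hK : HasBilinearBound K C) (hC : 0 ≤ C) :
    ∃ T : lp (fun _ : ι => ℂ) 2 →L[ℂ] lp (fun _ : ι => ℂ) 2,
      ‖T‖ ≤ C ∧ ∀ α n, T α n = ∑' m, K n m * α m := by
  have hsum_le (α : lp (fun _ : ι => ℂ) 2) (F : Finset ι) :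
      ∑ n ∈ F, ‖∑' m, K n m * α m‖ ^ (2 : ℝ≥0∞).toReal ≤ (C * ‖α‖) ^ (2 : ℝ≥0∞).toReal := by
    simpa using hK.sum_norm_sq_tsum_le hC α F
  let T : lp (fun _ : ι => ℂ) 2 →ₗ[ℂ] lp (fun _ : ι => ℂ) 2 :=
    { toFun α := ⟨fun n => ∑' m, K n m * α m, memℓp_gen' (hsum_le α)⟩
      map_add' α β := lp.ext <| funext fun n => by
        simp only [lp.coeFn_add, Pi.add_apply, mul_add]
        exact (hK.summable_row_mul n α).tsum_add (hK.summable_row_mul n β)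
      map_smul' c α := lp.ext <| funext fun n => by
        simp [← tsum_mul_left, mul_left_comm] }
  refine ⟨T.mkContinuous C fun α => ?_, T.mkContinuous_norm_le hC _, fun α n => rfl⟩
  exact lp.norm_le_of_forall_sum_le (by norm_num) (by positivity) (hsum_le α)

end HasBilinearBound

theorem hasBilinearBound_diagonal [DecidableEq ι] {d : ι → ℂ} {c : ℝ}
    (hd : ∀ n, ‖d n‖ ≤ c) : HasBilinearBound (fun n m => if m = n then d n else 0) c := by
  intro F G a b
  rcases isEmpty_or_nonempty ι with hι | ⟨⟨n₀⟩⟩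
  · simp [Finset.eq_empty_of_isEmpty F]
  have hc : 0 ≤ c := (norm_nonneg _).trans (hd n₀)
  have hdiag : ∑ n ∈ F, ∑ m ∈ G, b n * (if m = n then d n else 0) * a m =
      ∑ n ∈ F ∩ G, b n * d n * a n := by
    simp only [mul_ite, ite_mul, mul_zero, zero_mul, Finset.sum_ite_eq', Finset.sum_ite_mem]
  calc ‖∑ n ∈ F, ∑ m ∈ G, b n * (if m = n then d n else 0) * a m‖
      ≤ ∑ n ∈ F ∩ G, c * (‖a n‖ * ‖b n‖) := by
        rw [hdiag]
        refine (norm_sum_le _ _).trans (Finset.sum_le_sum fun n _ => ?_)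
        calc ‖b n * d n * a n‖ = ‖d n‖ * (‖a n‖ * ‖b n‖) := by rw [norm_mul, norm_mul]; ring
          _ ≤ c * (‖a n‖ * ‖b n‖) := by gcongr; exact hd n
    _ ≤ c * (√(∑ n ∈ F ∩ G, ‖a n‖ ^ 2) * √(∑ n ∈ F ∩ G, ‖b n‖ ^ 2)) := by
        rw [← Finset.mul_sum]
        gcongr
        exact Real.sum_mul_le_sqrt_mul_sqrt _ _ _
    _ ≤ c * √(∑ m ∈ G, ‖a m‖ ^ 2) * √(∑ n ∈ F, ‖b n‖ ^ 2) := by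
        rw [mul_assoc]
        gcongr
        exacts [Finset.inter_subset_right, Finset.inter_subset_left]

end BilinearBound

noncomputable def fourierExp (k : ℤ) (θ : ℝ) : ℂ := exp (k * θ * I)

@[fun_prop]
theorem continuous_fourierExp (k : ℤ) : Continuous (fourierExp k) := by
  unfold fourierExp; fun_prop

theorem fourierExp_add (k l : ℤ) (θ : ℝ) :
    fourierExp (k + l) θ = fourierExp k θ * fourierExp l θ := by
  simp only [fourierExp, ← Complex.exp_add]; push_cast; ring_nf

theorem conj_fourierExp (k : ℤ) (θ : ℝ) : conj (fourierExp k θ) = fourierExp (-k) θ := by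
  simp only [fourierExp, ← Complex.exp_conj, map_mul, conj_I, conj_ofReal, map_intCast]
  push_cast; ring_nf

theorem fourierExp_two_pi (k : ℤ) : fourierExp k (2 * π) = 1 := by
  simpa [fourierExp, mul_comm, mul_left_comm, mul_assoc] using Complex.exp_int_mul_two_pi_mul_I k

theorem fourierExp_zero_right (k : ℤ) : fourierExp k 0 = 1 := by simp [fourierExp]

theorem hasDerivAt_fourierExp (k : ℤ) (θ : ℝ) :
    HasDerivAt (fourierExp k) (k * I * fourierExp k θ) θ := by
  have h := ((hasDerivAt_id (θ : ℂ)).const_mul ((k : ℂ) * I)).cexp.comp_ofReal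
  convert h using 1
  · ext x; simp only [fourierExp, id]; ring_nf
  · simp only [fourierExp, id]; ring_nf

theorem integral_fourierExp (k : ℤ) :
    ∫ θ in (0 : ℝ)..2 * π, fourierExp k θ = if k = 0 then 2 * π else 0 := by
  split_ifs with hk
  · simp [hk, fourierExp]
  have hkI : (k : ℂ) * I ≠ 0 := by simp [hk]
  have hderiv (θ : ℝ) : HasDerivAt (fun θ => fourierExp k θ / (k * I)) (fourierExp k θ) θ := by
    simpa [hkI] using (hasDerivAt_fourierExp k θ).div_const ((k : ℂ) * I)
  rw [integral_eq_sub_of_hasDerivAt (fun θ _ => hderiv θ)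
    ((by fun_prop : Continuous _).intervalIntegrable _ _)]
  simp [fourierExp_two_pi, fourierExp_zero_right]

/-- At `k = 0` both sides vanish, since `(0 : ℂ)⁻¹ = 0`. -/
theorem integral_sawtooth_mul_fourierExp (k : ℤ) :
    ∫ θ in (0 : ℝ)..2 * π, (π - θ) * fourierExp k θ = 2 * π * I * (k : ℂ)⁻¹ := by
  rcases eq_or_ne k 0 with rfl | hk
  · simp [fourierExp, integral_sub, continuous_ofReal.intervalIntegrable, integral_ofReal]
    ring
  have hkI : (k : ℂ) * I ≠ 0 := by simp [hk]
  have hderiv (θ : ℝ) : HasDerivAt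
      (fun θ : ℝ => (π - θ) * fourierExp k θ / (k * I) + fourierExp k θ / (k * I) ^ 2)
      ((π - θ) * fourierExp k θ) θ := by
    have hlin : HasDerivAt (fun θ : ℝ => (π - θ : ℂ)) (-1) θ := by
      simpa using ((hasDerivAt_id θ).ofReal_comp).const_sub (π : ℂ)
    have h := ((hlin.mul (hasDerivAt_fourierExp k θ)).div_const ((k : ℂ) * I)).add
      ((hasDerivAt_fourierExp k θ).div_const (((k : ℂ) * I) ^ 2))
    exact h.congr_deriv (by field_simp; ring)
  rw [integral_eq_sub_of_hasDerivAt (fun θ _ => hderiv θ)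
    ((by fun_prop : Continuous _).intervalIntegrable _ _)]
  simp only [fourierExp_two_pi, fourierExp_zero_right]
  field_simp
  push_cast
  linear_combination (-2 * π * k * I) * I_sq

theorem integral_fourierExp_mul_conj (k l : ℤ) :
    ∫ θ in (0 : ℝ)..2 * π, fourierExp k θ * conj (fourierExp l θ) =
      if k = l then 2 * π else 0 := by
  simp only [conj_fourierExp, ← fourierExp_add, integral_fourierExp, add_neg_eq_zero]

theorem integral_norm_sq_sum_fourierExp {ι : Type*} (s : Finset ι) (c : ι → ℂ) {k : ι → ℤ}
    (hk : Set.InjOn k s) :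
    ∫ θ in (0 : ℝ)..2 * π, ‖∑ i ∈ s, c i * fourierExp (k i) θ‖ ^ 2 =
      2 * π * ∑ i ∈ s, ‖c i‖ ^ 2 := by
  apply Complex.ofReal_injective
  have hexpand (θ : ℝ) : ((‖∑ i ∈ s, c i * fourierExp (k i) θ‖ ^ 2 : ℝ) : ℂ) =
      ∑ i ∈ s, ∑ j ∈ s, c i * conj (c j) * (fourierExp (k i) θ * conj (fourierExp (k j) θ)) := by
    push_cast
    rw [← Complex.mul_conj', map_sum, Finset.sum_mul_sum]
    simp only [map_mul, mul_mul_mul_comm]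
  have hint (i j : ι) : IntervalIntegrable
      (fun θ => c i * conj (c j) * (fourierExp (k i) θ * conj (fourierExp (k j) θ)))
      MeasureTheory.volume 0 (2 * π) :=
    (by fun_prop : Continuous _).intervalIntegrable _ _
  rw [← integral_ofReal]
  simp only [hexpand]
  rw [integral_finsetSum fun i _ => (by fun_prop : Continuous _).intervalIntegrable _ _]
  simp only [integral_finsetSum fun j _ => hint _ j, integral_const_mul,
    integral_fourierExp_mul_conj]
  push_cast
  rw [Finset.mul_sum]
  refine Finset.sum_congr rfl fun i hi => ?_
  rw [Finset.sum_eq_single_of_mem i hi fun j hj hji => by simp [hk.ne hj hi hji |>.symm]]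
  simp [Complex.mul_conj']
  ring

open MeasureTheory in
theorem intervalIntegral.integral_norm_mul_norm_le_sqrt_mul_sqrt {E : Type*} [NormedAddCommGroup E]
    {f g : ℝ → E} {a b : ℝ} (hab : a ≤ b) (hf : Continuous f) (hg : Continuous g) :
    ∫ x in a..b, ‖f x‖ * ‖g x‖ ≤ √(∫ x in a..b, ‖f x‖ ^ 2) * √(∫ x in a..b, ‖g x‖ ^ 2) := by
  simp only [intervalIntegral.integral_of_le hab]
  have hmem {h : ℝ → E} (hh : Continuous h) :
      MemLp h (ENNReal.ofReal 2) (volume.restrict (Set.Ioc a b)) := by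
    rw [ENNReal.ofReal_ofNat, memLp_two_iff_integrable_sq_norm hh.aestronglyMeasurable]
    exact (hh.norm.pow 2).integrableOn_Ioc
  simpa [Real.sqrt_eq_rpow] using
    integral_mul_norm_le_Lp_mul_Lq Real.HolderConjugate.two_two (hmem hf) (hmem hg)

theorem norm_integral_sawtooth_mul_le {f g : ℝ → ℂ} (hf : Continuous f) (hg : Continuous g) :
    ‖∫ θ in (0 : ℝ)..2 * π, (π - θ) * (f θ * g θ)‖ ≤
      π * (√(∫ θ in (0 : ℝ)..2 * π, ‖f θ‖ ^ 2) * √(∫ θ in (0 : ℝ)..2 * π, ‖g θ‖ ^ 2)) := by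
  have h2π : (0 : ℝ) ≤ 2 * π := by positivity
  calc ‖∫ θ in (0 : ℝ)..2 * π, (π - θ) * (f θ * g θ)‖
      ≤ ∫ θ in (0 : ℝ)..2 * π, π * (‖f θ‖ * ‖g θ‖) := by
        refine norm_integral_le_of_norm_le h2π (MeasureTheory.ae_of_all _ fun θ hθ => ?_)
          ((by fun_prop : Continuous _).intervalIntegrable _ _)
        have hw : ‖(π - θ : ℂ)‖ ≤ π := by
          rw [← ofReal_sub, norm_real, Real.norm_eq_abs, abs_le]
          constructor <;> linarith [hθ.1, hθ.2]
        rw [norm_mul, norm_mul]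
        gcongr
    _ ≤ _ := by
        rw [integral_const_mul]
        gcongr
        exact integral_norm_mul_norm_le_sqrt_mul_sqrt h2π hf hg

theorem inv_sub_add_inv_eq_integral (n m : ℤ) :
    ((n : ℂ) - m)⁻¹ + ((n : ℂ) + m)⁻¹ = (2 * π * I)⁻¹ *
      ∫ θ in (0 : ℝ)..2 * π, (π - θ) * (fourierExp n θ * (fourierExp (-m) θ + fourierExp m θ)) := by
  have hsplit (θ : ℝ) : (π - θ) * (fourierExp n θ * (fourierExp (-m) θ + fourierExp m θ)) =
      (π - θ) * fourierExp (n - m) θ + (π - θ) * fourierExp (n + m) θ := by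
    rw [Int.sub_eq_add_neg, fourierExp_add, fourierExp_add]; ring
  simp only [hsplit]
  rw [integral_add ((by fun_prop : Continuous _).intervalIntegrable _ _)
    ((by fun_prop : Continuous _).intervalIntegrable _ _), integral_sawtooth_mul_fourierExp,
    integral_sawtooth_mul_fourierExp]
  field_simp
  push_cast
  ring

theorem hasBilinearBound_inv_sub_add_inv :
    HasBilinearBound (fun n m : ℕ+ => ((n : ℂ) - m)⁻¹ + ((n : ℂ) + m)⁻¹) (√2 * π) := by
  intro F G a b
  set g : ℝ → ℂ := fun θ => ∑ n ∈ F, b n * fourierExp n θ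
  set f : ℝ → ℂ := fun θ => ∑ m ∈ G, a m * (fourierExp (-m) θ + fourierExp m θ)
  have hg : ∫ θ in (0 : ℝ)..2 * π, ‖g θ‖ ^ 2 = 2 * π * ∑ n ∈ F, ‖b n‖ ^ 2 :=
    integral_norm_sq_sum_fourierExp F b (k := fun n : ℕ+ => (n : ℤ))
      fun n _ m _ h => PNat.coe_injective (by simpa using h)
  have hf : ∫ θ in (0 : ℝ)..2 * π, ‖f θ‖ ^ 2 = 2 * π * (2 * ∑ m ∈ G, ‖a m‖ ^ 2) := by
    have hinj : Function.Injective (Sum.elim (fun m : ℕ+ => -(m : ℤ)) fun m : ℕ+ => (m : ℤ)) := by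
      rintro (m | m) (m' | m') h <;> simp_all
    have hsum (θ : ℝ) : f θ = ∑ i ∈ G.disjSum G, Sum.elim a a i *
        fourierExp (Sum.elim (fun m : ℕ+ => -(m : ℤ)) (fun m : ℕ+ => (m : ℤ)) i) θ := by
      simp [f, Finset.sum_disjSum, mul_add, Finset.sum_add_distrib]
    simp only [hsum]
    rw [integral_norm_sq_sum_fourierExp _ _ hinj.injOn, Finset.sum_disjSum]
    simp only [Sum.elim_inl, Sum.elim_inr]
    ring
  have hrepr : ∑ n ∈ F, ∑ m ∈ G, b n * (((n : ℂ) - m)⁻¹ + ((n : ℂ) + m)⁻¹) * a m =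
      (2 * π * I)⁻¹ * ∫ θ in (0 : ℝ)..2 * π, (π - θ) * (g θ * f θ) := by
    have hexpand (θ : ℝ) : (π - θ) * (g θ * f θ) = ∑ n ∈ F, ∑ m ∈ G, b n * a m *
        ((π - θ) * (fourierExp n θ * (fourierExp (-m) θ + fourierExp m θ))) := by
      rw [Finset.sum_mul_sum, Finset.mul_sum]
      refine Finset.sum_congr rfl fun n _ => ?_
      rw [Finset.mul_sum]
      exact Finset.sum_congr rfl fun m _ => by ring
    simp only [hexpand]
    rw [integral_finsetSum fun n _ => (by fun_prop : Continuous _).intervalIntegrable _ _,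
      Finset.mul_sum]
    refine Finset.sum_congr rfl fun n _ => ?_
    rw [integral_finsetSum fun m _ => (by fun_prop : Continuous _).intervalIntegrable _ _,
      Finset.mul_sum]
    refine Finset.sum_congr rfl fun m _ => ?_
    have h := inv_sub_add_inv_eq_integral n m
    push_cast at h
    rw [integral_const_mul, h]
    ring
  have h2π : (0 : ℝ) ≤ 2 * π := by positivity
  have hcoef : ‖(2 * π * I : ℂ)⁻¹‖ = (2 * π)⁻¹ := by simp [abs_of_pos Real.pi_pos]
  calc ‖∑ n ∈ F, ∑ m ∈ G, b n * (((n : ℂ) - m)⁻¹ + ((n : ℂ) + m)⁻¹) * a m‖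
      ≤ (2 * π)⁻¹ * (π * (√(∫ θ in (0 : ℝ)..2 * π, ‖g θ‖ ^ 2) *
          √(∫ θ in (0 : ℝ)..2 * π, ‖f θ‖ ^ 2))) := by
        rw [hrepr, norm_mul, hcoef]
        gcongr
        exact norm_integral_sawtooth_mul_le (by fun_prop) (by fun_prop)
    _ = √2 * π * √(∑ m ∈ G, ‖a m‖ ^ 2) * √(∑ n ∈ F, ‖b n‖ ^ 2) := by
        rw [hg, hf, Real.sqrt_mul h2π, Real.sqrt_mul h2π,
          Real.sqrt_mul zero_le_two (∑ m ∈ G, ‖a m‖ ^ 2)]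
        calc _ = (2 * π)⁻¹ * (√(2 * π) * √(2 * π)) *
              (√2 * π * √(∑ m ∈ G, ‖a m‖ ^ 2) * √(∑ n ∈ F, ‖b n‖ ^ 2)) := by ring
          _ = _ := by rw [Real.mul_self_sqrt h2π, inv_mul_cancel₀ (by positivity), one_mul]

noncomputable def hilbertKernel (n m : ℕ+) : ℂ :=
  if m = n then 0 else 1 / ((n : ℂ) - m) + 1 / ((n : ℂ) + m)

/-- On the diagonal, `((n : ℂ) - n)⁻¹ = 0⁻¹ = 0`, so only the `(n + n)⁻¹` term is removed. -/
theorem hilbertKernel_eq_sub_diagonal (n m : ℕ+) :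
    hilbertKernel n m =
      ((n : ℂ) - m)⁻¹ + ((n : ℂ) + m)⁻¹ - if m = n then (2 * (n : ℂ))⁻¹ else 0 := by
  unfold hilbertKernel
  split_ifs with h
  · subst h; ring
  · simp

theorem hasBilinearBound_hilbertKernel : HasBilinearBound hilbertKernel (√2 * π + 1 / 2) := by
  have hdiag : ∀ n : ℕ+, ‖(2 * (n : ℂ))⁻¹‖ ≤ 1 / 2 := fun n => by
    rw [norm_inv, norm_mul, RCLike.norm_ofNat, RCLike.norm_natCast, one_div]
    gcongr
    linarith [show (1 : ℝ) ≤ n from mod_cast n.pos]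
  convert hasBilinearBound_inv_sub_add_inv.sub (hasBilinearBound_diagonal hdiag) using 1
  ext n m
  exact hilbertKernel_eq_sub_diagonal n m

theorem sqrt_two_mul_pi_add_half_le : √2 * π + 1 / 2 ≤ 2 * π := by
  have hs : √2 ≤ 3 / 2 := Real.sqrt_le_iff.2 ⟨by norm_num, by norm_num⟩
  nlinarith [Real.pi_gt_three]

/-- The discrete Hilbert transform `(Hα)_n = Σ_{m ≠ n} α_m (1/(n-m) + 1/(n+m))`
defines a bounded linear operator on `ℓ²(ℕ₊, ℂ)` of norm at most `2π`. -/
theorem discrete_hilbert_transform_bounded :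
    ∃ H : lp (fun _ : ℕ+ => ℂ) 2 →L[ℂ] lp (fun _ : ℕ+ => ℂ) 2,
      ‖H‖ ≤ 2 * π ∧
      ∀ (α : lp (fun _ : ℕ+ => ℂ) 2) (n : ℕ+),
        (H α) n = ∑' m : {m : ℕ+ // m ≠ n},
          α m * ((1 / ((n : ℂ) - (m : ℕ+)) + 1 / ((n : ℂ) + (m : ℕ+)))) := by
  obtain ⟨H, hH_norm, hH_apply⟩ := hasBilinearBound_hilbertKernel.exists_clm (by positivity)
  refine ⟨H, hH_norm.trans sqrt_two_mul_pi_add_half_le, fun α n => ?_⟩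
  have hsupp : Function.support (fun m => hilbertKernel n m * α m) ⊆ {m | m ≠ n} :=
    fun m hm hmn => hm (by simp [hmn, hilbertKernel])
  rw [hH_apply, ← tsum_subtype_eq_of_support_subset hsupp]
  exact tsum_congr fun m => by rw [hilbertKernel, if_neg m.2, mul_comm]
end

section
/- Let a = (a_m)_{m≥1}, b = (b_m)_{m≥1} be complex sequences with a − b ∈ ℓ², and suppose |b_m − λ| ≥ (1/ρ)|m² − n²| for all m ≠ n, where ρ > 0, n ≥ 1, and λ ∈ ℂ. Then Σ_{m≠n} |a_m − b_m|/|b_m − λ| ≤ (πρ/n) ‖a − b‖_{ℓ²}. -/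
open scoped Real

/-! Since `|m² - n²| ≥ n |m - n|`, the `m`-th term is at most `(ρ / n) |a_m - b_m| / |m - n|`.
By Cauchy–Schwarz the sum of these is at most `(ρ / n) ‖a - b‖_{ℓ²}` times the square root of
`∑_{m ≠ n} 1 / (m - n)²`, and the latter is at most `∑_{k ∈ ℤ, k ≠ 0} 1 / k² = π² / 3 ≤ π²`. -/

theorem hasSum_int_inv_sq : HasSum (fun k : ℤ => ((k : ℝ) ^ 2)⁻¹) (π ^ 2 / 3) := by
  have hpos : HasSum (fun k : ℕ => ((k : ℝ) ^ 2)⁻¹) (π ^ 2 / 6) := by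
    simpa only [one_div] using hasSum_zeta_two
  -- the `k = 0` term is `0⁻¹ = 0`, so shifting the index does not change the sum
  have hneg : HasSum (fun k : ℕ => ((((-(k + 1) : ℤ)) : ℝ) ^ 2)⁻¹) (π ^ 2 / 6) := by
    have := (hasSum_nat_add_iff' 1).mpr hpos
    simp only [Nat.cast_add, Nat.cast_one, Finset.range_one, Finset.sum_singleton,
      Nat.cast_zero] at this
    push_cast
    simp only [neg_sq]
    simpa using this
  have := hpos.of_nat_of_neg_add_one (f := fun k : ℤ => ((k : ℝ) ^ 2)⁻¹) hneg
  rwa [← add_halves (π ^ 2 / 3), div_div, show (3 : ℝ) * 2 = 6 by norm_num]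

theorem summable_and_tsum_inv_abs_sq_le_of_injective {α : Type*} {ι : α → ℤ}
    (hι : Function.Injective ι) :
    (Summable fun x => |(ι x : ℝ)|⁻¹ ^ 2) ∧ ∑' x, |(ι x : ℝ)|⁻¹ ^ 2 ≤ π ^ 2 / 3 := by
  simp only [inv_pow, sq_abs]
  have hsum := hasSum_int_inv_sq.summable.comp_injective hι
  refine ⟨hsum, ?_⟩
  rw [← hasSum_int_inv_sq.tsum_eq]
  exact hsum.tsum_le_tsum_of_inj ι hι (fun k _ => by positivity) (fun _ => le_rfl)
    hasSum_int_inv_sq.summable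

theorem Real.summable_and_tsum_mul_le_sqrt_mul_sqrt {ι : Type*} {f g : ι → ℝ}
    (hf : ∀ i, 0 ≤ f i) (hg : ∀ i, 0 ≤ g i) (hf_sum : Summable fun i => f i ^ 2)
    (hg_sum : Summable fun i => g i ^ 2) :
    (Summable fun i => f i * g i) ∧
      ∑' i, f i * g i ≤ √(∑' i, f i ^ 2) * √(∑' i, g i ^ 2) := by
  have h := Real.summable_and_inner_le_Lp_mul_Lq_tsum_of_nonneg .two_two hf hg
    (by simpa only [Real.rpow_two] using hf_sum) (by simpa only [Real.rpow_two] using hg_sum)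
  simpa only [Real.rpow_two, ← Real.sqrt_eq_rpow] using h

theorem mul_abs_sub_le_abs_sq_sub_sq {x y : ℝ} (hx : 0 ≤ x) (hy : 0 ≤ y) :
    y * |x - y| ≤ |x ^ 2 - y ^ 2| := by
  rw [show x ^ 2 - y ^ 2 = (x + y) * (x - y) by ring, abs_mul,
    abs_of_nonneg (by positivity : 0 ≤ x + y)]
  exact mul_le_mul_of_nonneg_right (by linarith) (abs_nonneg _)

theorem div_le_mul_inv_abs_sub_of_abs_sq_sub_sq_le {x y s t ρ : ℝ} (hx : 0 ≤ x) (hs : 0 ≤ s)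
    (ht : 0 < t) (hst : s ≠ t) (hρ : 0 < ρ) (hy : 1 / ρ * |s ^ 2 - t ^ 2| ≤ y) :
    x / y ≤ ρ / t * (x * |s - t|⁻¹) := by
  have hst' : 0 < |s - t| := abs_pos.mpr (sub_ne_zero.mpr hst)
  have hlow : t / ρ * |s - t| ≤ y := by
    calc t / ρ * |s - t| = 1 / ρ * (t * |s - t|) := by ring
      _ ≤ 1 / ρ * |s ^ 2 - t ^ 2| := by gcongr; exact mul_abs_sub_le_abs_sq_sub_sq hs ht.le
      _ ≤ y := hy
  calc x / y ≤ x / (t / ρ * |s - t|) := div_le_div_of_nonneg_left hx (by positivity) hlow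
    _ = ρ / t * (x * |s - t|⁻¹) := by field_simp

/-- If `a - b ∈ ℓ²` and `|b_m - λ| ≥ (1/ρ)|m² - n²|` for all `m ≠ n`, then
`Σ_{m ≠ n} |a_m - b_m| / |b_m - λ| ≤ (πρ/n) ‖a - b‖_{ℓ²}`. -/
theorem sum_ratio_le (a b : ℕ+ → ℂ) (ρ : ℝ) (hρ : 0 < ρ) (n : ℕ+) (lam : ℂ)
    (hab : Summable fun m => ‖a m - b m‖ ^ 2)
    (hlow : ∀ m : ℕ+, m ≠ n →
      (1 / ρ) * |((m : ℝ)) ^ 2 - (n : ℝ) ^ 2| ≤ ‖b m - lam‖) :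
    ∑' m : {m : ℕ+ // m ≠ n}, ‖a m - b m‖ / ‖b (m : ℕ+) - lam‖ ≤
      (π * ρ / n) * Real.sqrt (∑' m, ‖a m - b m‖ ^ 2) := by
  let f : {m : ℕ+ // m ≠ n} → ℝ := fun m => ‖a m - b m‖
  let ι : {m : ℕ+ // m ≠ n} → ℤ := fun m => (m : ℕ+) - (n : ℤ)
  have hι : Function.Injective ι := fun m m' h =>
    Subtype.ext <| PNat.coe_injective <| by simpa [ι] using h
  let g : {m : ℕ+ // m ≠ n} → ℝ := fun m => |(ι m : ℝ)|⁻¹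
  obtain ⟨hg_sum, hg_le⟩ := summable_and_tsum_inv_abs_sq_le_of_injective hι
  obtain ⟨hfg_sum, hCS⟩ := Real.summable_and_tsum_mul_le_sqrt_mul_sqrt
    (f := f) (g := g) (fun _ => norm_nonneg _) (fun _ => by positivity) (hab.subtype _) hg_sum
  have hpt : ∀ m : {m : ℕ+ // m ≠ n},
      ‖a m - b m‖ / ‖b (m : ℕ+) - lam‖ ≤ ρ / n * (f m * g m) := fun m => by
    simpa [g, ι] using div_le_mul_inv_abs_sub_of_abs_sq_sub_sq_le (norm_nonneg _)
      (Nat.cast_nonneg _) (Nat.cast_pos.mpr n.pos) (by exact_mod_cast m.2) hρ (hlow m m.2)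
  have hf_le : ∑' m : {m : ℕ+ // m ≠ n}, f m ^ 2 ≤ ∑' m, ‖a m - b m‖ ^ 2 :=
    hab.tsum_subtype_le _ {m | m ≠ n} (fun _ => sq_nonneg _)
  have hg_sqrt_le : √(∑' m, g m ^ 2) ≤ π :=
    (Real.sqrt_le_left Real.pi_pos.le).mpr (hg_le.trans (by linarith [sq_nonneg π]))
  have hρfg_sum := hfg_sum.mul_left (ρ / n)
  calc ∑' m : {m : ℕ+ // m ≠ n}, ‖a m - b m‖ / ‖b (m : ℕ+) - lam‖
      ≤ ∑' m, ρ / n * (f m * g m) :=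
        Summable.tsum_le_tsum hpt (.of_nonneg_of_le (fun _ => by positivity) hpt hρfg_sum) hρfg_sum
    _ = ρ / n * ∑' m, f m * g m := tsum_mul_left
    _ ≤ ρ / n * (√(∑' m, ‖a m - b m‖ ^ 2) * π) := by
        gcongr
        exact hCS.trans (by gcongr)
    _ = π * ρ / n * √(∑' m, ‖a m - b m‖ ^ 2) := by ring
end

section
/- Fix ρ > 0 and sequences a, b of complex numbers with a − b ∈ ℓ², and for each n ≥ 1 let λ_n ∈ ℂ satisfy |b_m − λ_n| ≥ (1/ρ)|m² − n²| for all m ≠ n. Define B_n := Σ_{m≠n} |a_m − b_m|²/|b_m − λ_n|². Then Σ_{n≥1} n² B_n ≤ 4ρ² ‖a − b‖²_{ℓ²}. -/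
/-!
Since `|m² - n²| ≥ n |m - n|`, the isolating condition gives `n² / |b_m - λ_n|² ≤ ρ² / (n - m)²`.
Exchanging the order of summation in the resulting double series of nonnegative terms, every
`|a_m - b_m|²` is weighted by at most `ρ² Σ_{k ≠ 0} 1 / k² = ρ² π² / 3 ≤ 4 ρ²`.
-/

open Real Function

-- The `k = 0` term is `1 / 0 = 0`.
theorem hasSum_one_div_int_sq : HasSum (fun k : ℤ => 1 / (k : ℝ) ^ 2) (π ^ 2 / 3) := by
  have h := hasSum_zeta_two.of_nat_of_neg (f := fun k : ℤ => 1 / (k : ℝ) ^ 2)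
    (by simpa using hasSum_zeta_two)
  rwa [Int.cast_zero, zero_pow two_ne_zero, div_zero, sub_zero,
    show π ^ 2 / 6 + π ^ 2 / 6 = π ^ 2 / 3 by ring] at h

section InverseSquareBound

variable {ι : Type*} {g : ι → ℤ} {F : ι → ℝ} {c : ℝ}

theorem summable_of_le_div_int_sq (hg : Injective g) (hF0 : ∀ i, 0 ≤ F i)
    (hF : ∀ i, F i ≤ c / (g i : ℝ) ^ 2) : Summable F := by
  simp_rw [div_eq_mul_one_div c] at hF
  exact ((hasSum_one_div_int_sq.summable.comp_injective hg).mul_left c).of_nonneg_of_le hF0 hF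

theorem tsum_le_of_le_div_int_sq (hg : Injective g) (hc : 0 ≤ c) (hF0 : ∀ i, 0 ≤ F i)
    (hF : ∀ i, F i ≤ c / (g i : ℝ) ^ 2) : ∑' i, F i ≤ 4 * c := by
  simp_rw [div_eq_mul_one_div c] at hF
  have hsum := hasSum_one_div_int_sq.summable.comp_injective hg
  calc ∑' i, F i ≤ ∑' i, c * (1 / (g i : ℝ) ^ 2) :=
        (hsum.mul_left c).of_nonneg_of_le hF0 hF |>.tsum_le_tsum hF (hsum.mul_left c)
    _ = c * ∑' i, 1 / (g i : ℝ) ^ 2 := tsum_mul_left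
    _ ≤ c * ∑' k : ℤ, 1 / (k : ℝ) ^ 2 := by
        gcongr
        exact tsum_comp_le_tsum_of_inj hasSum_one_div_int_sq.summable (fun _ => by positivity) hg
    _ = c * (π ^ 2 / 3) := by rw [hasSum_one_div_int_sq.tsum_eq]
    _ ≤ c * 4 := by gcongr; nlinarith [pi_lt_d2, pi_pos]
    _ = 4 * c := mul_comm c 4

end InverseSquareBound

theorem tsum_tsum_le_of_tsum_le {ι κ : Type*} {F : ι → κ → ℝ} {g : κ → ℝ}
    (hF : ∀ i j, 0 ≤ F i j) (hFs : ∀ j, Summable fun i => F i j)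
    (hFg : ∀ j, ∑' i, F i j ≤ g j) (hg : Summable g) :
    ∑' i, ∑' j, F i j ≤ ∑' j, g j := by
  have hcol : Summable fun j => ∑' i, F i j :=
    hg.of_nonneg_of_le (fun j => tsum_nonneg fun i => hF i j) hFg
  have hsum : Summable (uncurry fun j i => F i j) :=
    (summable_prod_of_nonneg fun p => hF p.2 p.1).mpr ⟨hFs, hcol⟩
  rw [hsum.tsum_comm]
  exact hcol.tsum_le_tsum hFg hg

theorem sq_div_sq_le_of_isolated {ρ x y D : ℝ} (hρ : 0 < ρ) (hx : 0 ≤ x) (hy : 0 ≤ y)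
    (hxy : x ≠ y) (hD : 1 / ρ * |x ^ 2 - y ^ 2| ≤ D) :
    y ^ 2 / D ^ 2 ≤ ρ ^ 2 / (y - x) ^ 2 := by
  have hdiff : 0 < |y - x| := abs_pos.mpr (sub_ne_zero.mpr hxy.symm)
  have hpos : 0 < x + y := by
    by_contra h
    exact hxy (by linarith)
  have hρD : |y - x| * (x + y) ≤ ρ * D := by
    rw [one_div, inv_mul_le_iff₀ hρ, show x ^ 2 - y ^ 2 = -(y - x) * (x + y) by ring, abs_mul,
      abs_neg, abs_of_pos hpos] at hD
    exact hD
  have hDpos : 0 < D := pos_of_mul_pos_right ((mul_pos hdiff hpos).trans_le hρD) hρ.le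
  rw [div_le_div_iff₀ (by positivity) (by positivity), ← sq_abs (y - x), ← mul_pow, ← mul_pow]
  refine pow_le_pow_left₀ (by positivity) ?_ 2
  nlinarith

/-- With `B_n = Σ_{m ≠ n} |a_m - b_m|²/|b_m - λ_n|²` under the isolating condition
`|b_m - λ_n| ≥ (1/ρ)|m² - n²|`, one has `Σ n² B_n ≤ 4ρ² ‖a - b‖²_{ℓ²}`. -/
theorem sum_weighted_B_le (a b : ℕ+ → ℂ) (ρ : ℝ) (hρ : 0 < ρ) (lam : ℕ+ → ℂ)
    (hab : Summable fun m => ‖a m - b m‖ ^ 2)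
    (hlow : ∀ n m : ℕ+, m ≠ n →
      (1 / ρ) * |((m : ℝ)) ^ 2 - (n : ℝ) ^ 2| ≤ ‖b m - lam n‖) :
    ∑' n : ℕ+, (n : ℝ) ^ 2 *
        ∑' m : {m : ℕ+ // m ≠ n}, ‖a m - b m‖ ^ 2 / ‖b (m : ℕ+) - lam n‖ ^ 2 ≤
      4 * ρ ^ 2 * ∑' m, ‖a m - b m‖ ^ 2 := by
  set f : ℕ+ → ℝ := fun m => ‖a m - b m‖ ^ 2
  set F : ℕ+ → ℕ+ → ℝ := fun n m =>
    (n : ℝ) ^ 2 * {m | m ≠ n}.indicator (fun m => f m / ‖b m - lam n‖ ^ 2) m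
  have hF0 : ∀ n m, 0 ≤ F n m := fun n m =>
    mul_nonneg (sq_nonneg _) (Set.indicator_nonneg (fun _ _ => by positivity) m)
  -- at `n = m` both sides vanish, the right one because `x / 0 = 0`
  have hF_le : ∀ n m, F n m ≤ ρ ^ 2 * f m / (((n : ℤ) - m : ℤ) : ℝ) ^ 2 := by
    intro n m
    rcases eq_or_ne m n with rfl | hmn
    · simp [F]
    · have hkernel := sq_div_sq_le_of_isolated hρ (by positivity) (by positivity)
        (by exact_mod_cast hmn) (hlow n m hmn)
      simp only [F, Set.indicator_of_mem (show m ∈ {m | m ≠ n} from hmn)]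
      push_cast
      calc (n : ℝ) ^ 2 * (f m / ‖b m - lam n‖ ^ 2) = f m * ((n : ℝ) ^ 2 / ‖b m - lam n‖ ^ 2) := by
            ring
        _ ≤ f m * (ρ ^ 2 / ((n : ℝ) - m) ^ 2) := by gcongr
        _ = _ := by ring
  have hinj (m : ℕ+) : Injective fun n : ℕ+ => (n : ℤ) - m := fun n n' h => by simpa using h
  calc _ = ∑' n, ∑' m, F n m := tsum_congr fun n => by
          rw [tsum_mul_left]
          exact congrArg _ (tsum_subtype {m | m ≠ n} fun m => f m / ‖b m - lam n‖ ^ 2)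
    _ ≤ ∑' m, 4 * (ρ ^ 2 * f m) :=
        tsum_tsum_le_of_tsum_le hF0
          (fun m => summable_of_le_div_int_sq (hinj m) (hF0 · m) (hF_le · m))
          (fun m => tsum_le_of_le_div_int_sq (hinj m) (by positivity) (hF0 · m) (hF_le · m))
          ((hab.mul_left (ρ ^ 2)).mul_left 4)
    _ = _ := by rw [tsum_mul_left, tsum_mul_left, mul_assoc]
end

section
/- Let α ≥ 0, ε > 0, and u ∈ ℓ^{2,α}(ℂ). Then for every v ∈ ℓ^{1,2α}(ℂ) with ‖v − Q(u)‖_{ℓ^{1,2α}} < ε there exists w ∈ ℓ^{2,α}(ℂ) with ‖w − u‖_{ℓ^{2,α}} < √ε and w_k² = v_k for every k ≥ 1. In other words, Q(B_{ℓ^{2,α}}(u; √ε)) ⊇ B_{ℓ^{1,2α}}(Q(u); ε). -/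
/-
Writing `v - u² = (s - u)(s + u)` for a square root `s` of `v`, one of the two roots `±s` lies
within `‖v - u²‖^{1/2}` of `u`. Choosing it in every coordinate bounds the weighted `ℓ²` distance
`∑ k^{2α} ‖w_k - u_k‖²` termwise by the weighted `ℓ¹` distance `∑ k^{2α} ‖v_k - u_k²‖ < ε`.
-/

lemma exists_sq_eq_and_norm_sub_sq_le {K : Type*} [NormedField K] [IsAlgClosed K] (v u : K) :
    ∃ w : K, w ^ 2 = v ∧ ‖w - u‖ ^ 2 ≤ ‖v - u ^ 2‖ := by
  obtain ⟨s, hs⟩ := IsAlgClosed.exists_pow_nat_eq v two_pos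
  have hfactor : ‖s - u‖ * ‖-s - u‖ = ‖v - u ^ 2‖ := by
    rw [← norm_mul, ← hs, ← norm_neg]
    ring_nf
  rcases le_total ‖s - u‖ ‖-s - u‖ with h | h
  · exact ⟨s, hs, by rw [← hfactor, sq]; gcongr⟩
  · exact ⟨-s, by rw [neg_sq, hs], by rw [← hfactor, sq]; gcongr⟩

section WeightedSummable

variable {ι E : Type*} [SeminormedAddCommGroup E] {c : ι → ℝ} {a b : ι → E}

lemma summable_weight_mul_norm_sub (hc : ∀ i, 0 ≤ c i)
    (ha : Summable fun i => c i * ‖a i‖) (hb : Summable fun i => c i * ‖b i‖) :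
    Summable fun i => c i * ‖a i - b i‖ :=
  (ha.add hb).of_nonneg_of_le (fun i => mul_nonneg (hc i) (norm_nonneg _)) fun i => by
    rw [← mul_add]
    exact mul_le_mul_of_nonneg_left (norm_sub_le _ _) (hc i)

lemma summable_weight_mul_norm_sq_of_sub (hc : ∀ i, 0 ≤ c i)
    (hab : Summable fun i => c i * ‖a i - b i‖ ^ 2) (hb : Summable fun i => c i * ‖b i‖ ^ 2) :
    Summable fun i => c i * ‖a i‖ ^ 2 :=
  ((hab.add hb).mul_left 2).of_nonneg_of_le (fun i => by have := hc i; positivity) fun i => by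
    have hnorm : ‖a i‖ ≤ ‖a i - b i‖ + ‖b i‖ := norm_le_norm_sub_add _ _
    calc c i * ‖a i‖ ^ 2 ≤ c i * (2 * (‖a i - b i‖ ^ 2 + ‖b i‖ ^ 2)) :=
          mul_le_mul_of_nonneg_left
            ((pow_le_pow_left₀ (norm_nonneg _) hnorm 2).trans add_sq_le) (hc i)
      _ = 2 * (c i * ‖a i - b i‖ ^ 2 + c i * ‖b i‖ ^ 2) := by ring

end WeightedSummable

theorem Q_ball_superset_general (α : ℝ) (ε : ℝ) (u v : ℕ+ → ℂ)
    (hu : Summable fun k : ℕ+ => (k : ℝ) ^ (2 * α) * ‖u k‖ ^ 2)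
    (hv : Summable fun k : ℕ+ => (k : ℝ) ^ (2 * α) * ‖v k‖)
    (hclose : ∑' k : ℕ+, (k : ℝ) ^ (2 * α) * ‖v k - (u k) ^ 2‖ < ε) :
    ∃ w : ℕ+ → ℂ, (∀ k, (w k) ^ 2 = v k) ∧
      (Summable fun k : ℕ+ => (k : ℝ) ^ (2 * α) * ‖w k‖ ^ 2) ∧
      Real.sqrt (∑' k : ℕ+, (k : ℝ) ^ (2 * α) * ‖w k - u k‖ ^ 2) < Real.sqrt ε := by
  have hweight : ∀ k : ℕ+, 0 ≤ (k : ℝ) ^ (2 * α) := fun k => by positivity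
  choose w hw hroot using fun k => exists_sq_eq_and_norm_sub_sq_le (v k) (u k)
  have hu_sq : Summable fun k : ℕ+ => (k : ℝ) ^ (2 * α) * ‖u k ^ 2‖ := by
    simpa only [norm_pow] using hu
  have hvu := summable_weight_mul_norm_sub hweight hv hu_sq
  have hle : ∀ k : ℕ+,
      (k : ℝ) ^ (2 * α) * ‖w k - u k‖ ^ 2 ≤ (k : ℝ) ^ (2 * α) * ‖v k - u k ^ 2‖ :=
    fun k => mul_le_mul_of_nonneg_left (hroot k) (hweight k)
  have hwu : Summable fun k : ℕ+ => (k : ℝ) ^ (2 * α) * ‖w k - u k‖ ^ 2 :=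
    hvu.of_nonneg_of_le (fun k => by positivity) hle
  refine ⟨w, hw, summable_weight_mul_norm_sq_of_sub hweight hwu hu, ?_⟩
  exact Real.sqrt_lt_sqrt (tsum_nonneg fun k => by positivity)
    ((hwu.tsum_le_tsum hle hvu).trans_lt hclose)

/-- `Q(B_{ℓ^{2,α}}(u; √ε)) ⊇ B_{ℓ^{1,2α}}(Q(u); ε)`: every `v` within `ε` of `Q(u)` in
the `ℓ^{1,2α}` norm admits a sequence of square roots `w` (i.e. `w_k² = v_k`) lying in
`ℓ^{2,α}` within `√ε` of `u`. -/
theorem Q_ball_superset (α : ℝ) (hα : 0 ≤ α) (ε : ℝ) (hε : 0 < ε) (u v : ℕ+ → ℂ)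
    (hu : Summable fun k : ℕ+ => (k : ℝ) ^ (2 * α) * ‖u k‖ ^ 2)
    (hv : Summable fun k : ℕ+ => (k : ℝ) ^ (2 * α) * ‖v k‖)
    (hclose : ∑' k : ℕ+, (k : ℝ) ^ (2 * α) * ‖v k - (u k) ^ 2‖ < ε) :
    ∃ w : ℕ+ → ℂ, (∀ k, (w k) ^ 2 = v k) ∧
      (Summable fun k : ℕ+ => (k : ℝ) ^ (2 * α) * ‖w k‖ ^ 2) ∧
      Real.sqrt (∑' k : ℕ+, (k : ℝ) ^ (2 * α) * ‖w k - u k‖ ^ 2) < Real.sqrt ε :=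
  Q_ball_superset_general α ε u v hu hv hclose
end

section
/- Let q ∈ L²([0,1],ℂ) satisfy q(x) = q(1−x) for a.e. x, and let η be a Neumann eigenvalue of −d²/dx² + q on [0,1], with y₁(·,η) the solution of −y'' + qy = ηy with y₁(0)=1, y₁'(0)=0. Then y₁(1,η)² = 1. -/
open MeasureTheory intervalIntegral

/-!
Put `p = q - η` and `c = y₁(1)`. Reflection `x ↦ 1 - x` maps solutions of `u'' = p u` to
solutions when `p` is even, so `u(x) = y₁(1 - x) - c y₁(x)` solves the equation with
`u(0) = 0` and `u'(0) = -y₁'(1) = 0`. A Gronwall-type argument, run on subintervals where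
`∫ ‖p‖ ≤ 1/2`, shows that such a `u` vanishes identically; at `x = 1` this reads `1 - c² = 0`.
-/

open Set Filter Topology

theorem HasDerivAt.eq_zero_of_eqOn_Icc {E : Type*} [NormedAddCommGroup E] [NormedSpace ℝ E]
    {f : ℝ → E} {f' : E} {a b x : ℝ} (hab : a < b) (hf : EqOn f 0 (Icc a b))
    (hx : x ∈ Icc a b) (h : HasDerivAt f f' x) : f' = 0 :=
  (uniqueDiffOn_Icc hab x hx).eq_deriv _ h.hasDerivWithinAt
    ((hasDerivWithinAt_const x _ 0).congr (fun _ ht => hf ht) (hf hx))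

theorem measurePreserving_reflect_Icc (a b : ℝ) :
    MeasurePreserving (fun x : ℝ => a + b - x) (volume.restrict (Icc a b))
      (volume.restrict (Icc a b)) := by
  have h := (volume.measurePreserving_sub_left (a + b)).restrict_preimage
    (measurableSet_Icc (a := a) (b := b))
  rwa [preimage_const_sub_Icc, add_sub_cancel_right, add_sub_cancel_left] at h

/-- `u` solves `u'' = p u` on `[a, b]`, with `u'` the derivative of `u` and `u''` an
a.e. derivative of `u'`, recorded through `u' x = u' a + ∫ₐˣ u''`. -/
structure IsSolutionOn (p : ℝ → ℂ) (a b : ℝ) (u u' u'' : ℝ → ℂ) : Prop where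
  hasDerivAt : ∀ x ∈ Icc a b, HasDerivAt u (u' x) x
  deriv_eq : ∀ x ∈ Icc a b, u' x = u' a + ∫ t in a..x, u'' t
  ode : ∀ᵐ x ∂volume.restrict (Icc a b), u'' x = p x * u x

namespace IsSolutionOn

variable {p : ℝ → ℂ} {a b : ℝ} {u u' u'' v v' v'' : ℝ → ℂ}

theorem continuousOn (h : IsSolutionOn p a b u u' u'') : ContinuousOn u (Icc a b) :=
  fun x hx => (h.hasDerivAt x hx).continuousAt.continuousWithinAt

theorem integrableOn_deriv2 (hp : IntegrableOn p (Icc a b)) (h : IsSolutionOn p a b u u' u'') :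
    IntegrableOn u'' (Icc a b) :=
  (hp.mul_continuousOn h.continuousOn isCompact_Icc).congr_fun_ae
    (h.ode.mono fun _ hx => hx.symm)

theorem deriv_sub_eq_integral (hp : IntegrableOn p (Icc a b))
    (h : IsSolutionOn p a b u u' u'') {x y : ℝ} (hx : x ∈ Icc a b) (hy : y ∈ Icc a b) :
    u' y - u' x = ∫ t in x..y, u'' t := by
  have hI : ∀ z ∈ Icc a b, IntervalIntegrable u'' volume a z := fun z hz =>
    ((h.integrableOn_deriv2 hp).mono_set (uIcc_subset_Icc (left_mem_Icc.2 (hz.1.trans hz.2)) hz)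
      ).intervalIntegrable
  rw [h.deriv_eq y hy, h.deriv_eq x hx, add_sub_add_left_eq_sub,
    integral_interval_sub_left (hI y hy) (hI x hx)]

theorem continuousOn_deriv (hp : IntegrableOn p (Icc a b)) (h : IsSolutionOn p a b u u' u'') :
    ContinuousOn u' (Icc a b) := by
  rcases lt_or_ge b a with hba | hab
  · simp [Icc_eq_empty_of_lt hba]
  have hprim := continuousOn_primitive_interval (μ := volume)
    (by rw [uIcc_of_le hab]; exact h.integrableOn_deriv2 hp : IntegrableOn u'' (uIcc a b))
  rw [uIcc_of_le hab] at hprim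
  exact (continuousOn_const.add hprim).congr h.deriv_eq

theorem mono (hp : IntegrableOn p (Icc a b)) (h : IsSolutionOn p a b u u' u'') {c d : ℝ}
    (hac : a ≤ c) (hdb : d ≤ b) : IsSolutionOn p c d u u' u'' where
  hasDerivAt x hx := h.hasDerivAt x (Icc_subset_Icc hac hdb hx)
  deriv_eq x hx := by
    have hsub := Icc_subset_Icc hac hdb
    rw [← h.deriv_sub_eq_integral hp (hsub (left_mem_Icc.2 (hx.1.trans hx.2))) (hsub hx)]
    ring
  ode := ae_restrict_of_ae_restrict_of_subset (Icc_subset_Icc hac hdb) h.ode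

theorem congr_potential {q : ℝ → ℂ} (h : IsSolutionOn p a b u u' u'')
    (hpq : p =ᵐ[volume.restrict (Icc a b)] q) : IsSolutionOn q a b u u' u'' :=
  { h with ode := by filter_upwards [h.ode, hpq] with x hx hpx; rw [hx, hpx] }

theorem sub (hp : IntegrableOn p (Icc a b)) (hu : IsSolutionOn p a b u u' u'')
    (hv : IsSolutionOn p a b v v' v'') : IsSolutionOn p a b (u - v) (u' - v') (u'' - v'') where
  hasDerivAt x hx := (hu.hasDerivAt x hx).sub (hv.hasDerivAt x hx)
  deriv_eq x hx := by
    have hI : ∀ {w : ℝ → ℂ}, IntegrableOn w (Icc a b) → IntervalIntegrable w volume a x :=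
      fun hw => (hw.mono_set (uIcc_subset_Icc (left_mem_Icc.2 (hx.1.trans hx.2)) hx)
        ).intervalIntegrable
    simp only [Pi.sub_apply]
    rw [integral_sub (hI (hu.integrableOn_deriv2 hp)) (hI (hv.integrableOn_deriv2 hp)),
      hu.deriv_eq x hx, hv.deriv_eq x hx]
    ring
  ode := by
    filter_upwards [hu.ode, hv.ode] with x hux hvx
    simp only [Pi.sub_apply, hux, hvx, mul_sub]

theorem const_mul (c : ℂ) (h : IsSolutionOn p a b u u' u'') :
    IsSolutionOn p a b (fun x => c * u x) (fun x => c * u' x) (fun x => c * u'' x) where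
  hasDerivAt x hx := (h.hasDerivAt x hx).const_mul c
  deriv_eq x hx := by rw [intervalIntegral.integral_const_mul, h.deriv_eq x hx, mul_add]
  ode := by
    filter_upwards [h.ode] with x hx
    rw [hx, mul_left_comm]

theorem comp_reflect (hp : IntegrableOn p (Icc a b)) (h : IsSolutionOn p a b u u' u'') :
    IsSolutionOn (fun x => p (a + b - x)) a b (fun x => u (a + b - x)) (fun x => -u' (a + b - x))
      (fun x => u'' (a + b - x)) where
  hasDerivAt x hx := by
    refine (h.hasDerivAt _ ?_).comp_const_sub (a + b) x
    constructor <;> linarith [hx.1, hx.2]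
  deriv_eq x hx := by
    have hrefl : a + b - x ∈ Icc a b := by constructor <;> linarith [hx.1, hx.2]
    rw [integral_comp_sub_left, add_sub_cancel_left,
      ← h.deriv_sub_eq_integral hp hrefl (right_mem_Icc.2 (hx.1.trans hx.2))]
    ring
  ode := (measurePreserving_reflect_Icc a b).quasiMeasurePreserving.ae h.ode

theorem norm_deriv_le (hp : IntegrableOn p (Icc a b)) (h : IsSolutionOn p a b u u' u'')
    (ha' : u' a = 0) {M : ℝ} (hM : ∀ x ∈ Icc a b, ‖u x‖ ≤ M) {x : ℝ} (hx : x ∈ Icc a b) :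
    ‖u' x‖ ≤ (∫ t in a..b, ‖p t‖) * M := by
  have hM0 : 0 ≤ M := (norm_nonneg _).trans (hM x hx)
  have hpI : IntervalIntegrable (fun t => ‖p t‖ * M) volume a b :=
    (intervalIntegrable_iff_integrableOn_Icc_of_le (hx.1.trans hx.2)).2 (hp.norm.mul_const M)
  have hsub : Ioc a x ⊆ Icc a b := Ioc_subset_Icc_self.trans (Icc_subset_Icc le_rfl hx.2)
  calc ‖u' x‖ = ‖∫ t in a..x, u'' t‖ := by rw [h.deriv_eq x hx, ha', zero_add]
    _ ≤ ∫ t in a..x, ‖p t‖ * M := by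
      refine norm_integral_le_of_norm_le hx.1 ?_ (hpI.mono_set ?_)
      · filter_upwards [(ae_restrict_iff' measurableSet_Ioc).1
          (ae_restrict_of_ae_restrict_of_subset hsub h.ode)] with t ht htI
        rw [ht htI, norm_mul]
        exact mul_le_mul_of_nonneg_left (hM t (hsub htI)) (norm_nonneg _)
      · exact uIcc_subset_uIcc_left (uIcc_of_le (hx.1.trans hx.2) ▸ hx)
    _ ≤ ∫ t in a..b, ‖p t‖ * M :=
      integral_mono_interval le_rfl hx.1 hx.2 (Eventually.of_forall fun t => by positivity) hpI
    _ = (∫ t in a..b, ‖p t‖) * M := integral_mul_const _ _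

theorem eqOn_zero_of_integral_norm_le (hp : IntegrableOn p (Icc a b))
    (h : IsSolutionOn p a b u u' u'') (hba : b - a ≤ 1) (hsmall : ∫ t in a..b, ‖p t‖ ≤ 1 / 2)
    (ha : u a = 0) (ha' : u' a = 0) : EqOn u 0 (Icc a b) := by
  rcases (Icc a b).eq_empty_or_nonempty with hempty | hne
  · simp [hempty]
  obtain ⟨x₀, hx₀, hmax⟩ := isCompact_Icc.exists_isMaxOn hne h.continuousOn.norm
  set M := ‖u x₀‖
  have hderiv : ∀ x ∈ Ico a b, ‖u' x‖ ≤ M / 2 := fun x hx =>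
    calc ‖u' x‖ ≤ (∫ t in a..b, ‖p t‖) * M :=
          h.norm_deriv_le hp ha' (fun _ ht => hmax ht) (Ico_subset_Icc_self hx)
      _ ≤ M / 2 := by nlinarith [norm_nonneg (u x₀)]
  have hM : M ≤ M / 2 :=
    calc M = ‖u x₀ - u a‖ := by rw [ha, sub_zero]
      _ ≤ M / 2 * (x₀ - a) := norm_image_sub_le_of_norm_deriv_le_segment'
          (fun x hx => (h.hasDerivAt x hx).hasDerivWithinAt) hderiv x₀ hx₀
      _ ≤ M / 2 := mul_le_of_le_one_right (by positivity) (by linarith [hx₀.1, hx₀.2])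
  intro x hx
  exact norm_le_zero_iff.1 ((hmax hx).trans (by linarith [norm_nonneg (u x₀)]))

/-- The set where `u` and `u'` both vanish is closed, and by
`eqOn_zero_of_integral_norm_le` it contains a right neighbourhood of each of its points. -/
theorem eqOn_zero (hp : IntegrableOn p (Icc a b)) (h : IsSolutionOn p a b u u' u'')
    (ha : u a = 0) (ha' : u' a = 0) : EqOn u 0 (Icc a b) := by
  set s := {x | u x = 0 ∧ u' x = 0}
  suffices Icc a b ⊆ s from fun x hx => (this hx).1
  refine IsClosed.Icc_subset_of_forall_mem_nhdsWithin ?_ ⟨ha, ha'⟩ ?_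
  · have := (h.continuousOn.prodMk (h.continuousOn_deriv hp)).preimage_isClosed_of_isClosed
      isClosed_Icc (isClosed_singleton (x := ((0 : ℂ), (0 : ℂ))))
    rw [inter_comm]
    convert this using 2
    ext x
    simp [s, Prod.ext_iff]
  rintro x ⟨⟨hux, hu'x⟩, hxa, hxb⟩
  have hab : a ≤ b := hxa.trans hxb.le
  have hxI : x ∈ Icc a b := ⟨hxa, hxb.le⟩
  have hF : ∀ᶠ c in 𝓝[>] x, ∫ t in x..c, ‖p t‖ < 1 / 2 := by
    have hcont := continuousOn_primitive_interval' (μ := volume)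
      ((intervalIntegrable_iff_integrableOn_Icc_of_le hab).2 hp.norm) (by rwa [uIcc_of_le hab])
    rw [uIcc_of_le hab] at hcont
    have hlim := (hcont x hxI).tendsto
    rw [integral_same] at hlim
    rw [← nhdsWithin_Ioo_eq_nhdsGT hxb]
    exact nhdsWithin_mono _ (Ioo_subset_Icc_self.trans (Icc_subset_Icc hxa le_rfl))
      (hlim.eventually (gt_mem_nhds (by norm_num)))
  obtain ⟨c, ⟨hFc, hxc, hcb⟩⟩ :=
    (hF.and (Ioc_mem_nhdsGT (lt_min hxb (lt_add_one x)))).exists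
  have hsol := h.mono hp hxa (hcb.trans (min_le_left _ _))
  have hzero := hsol.eqOn_zero_of_integral_norm_le
    (hp.mono_set (Icc_subset_Icc hxa (hcb.trans (min_le_left _ _))))
    (by linarith [min_le_right b (x + 1)]) hFc.le hux hu'x
  exact mem_of_superset (Icc_mem_nhdsGT hxc) fun t ht =>
    ⟨hzero ht, (hsol.hasDerivAt t ht).eq_zero_of_eqOn_Icc hxc hzero ht⟩

end IsSolutionOn

/-- If `q ∈ L²([0,1], ℂ)` is even (`q(x) = q(1-x)` a.e.) and `η` is a Neumann
eigenvalue of `-d²/dx² + q` with eigenfunction `y₁` normalized by `y₁(0) = 1`,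
`y₁'(0) = 0`, then `y₁(1)² = 1`. -/
theorem neumann_eigenvalue_even_potential
    (q : ℝ → ℂ) (hq : MemLp q 2 (volume.restrict (Set.Icc (0:ℝ) 1)))
    (hqeven : ∀ᵐ x ∂(volume.restrict (Set.Icc (0:ℝ) 1)), q x = q (1 - x))
    (η : ℂ) (y y' y'' : ℝ → ℂ)
    (hy : ∀ x ∈ Set.Icc (0:ℝ) 1, HasDerivAt y (y' x) x)
    (hy' : ∀ x ∈ Set.Icc (0:ℝ) 1, y' x = y' 0 + ∫ t in (0:ℝ)..x, y'' t)
    (heq : ∀ᵐ x ∂(volume.restrict (Set.Icc (0:ℝ) 1)),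
      -(y'' x) + q x * y x = η * y x)
    (h0 : y 0 = 1) (h0' : y' 0 = 0) (h1 : y' 1 = 0) :
    (y 1) ^ 2 = 1 := by
  have hp : IntegrableOn (fun x => q x - η) (Icc 0 1) :=
    (hq.integrable one_le_two).sub (integrableOn_const (by simp))
  have hsol : IsSolutionOn (fun x => q x - η) 0 1 y y' y'' :=
    ⟨hy, hy', heq.mono fun x hx => by linear_combination -hx⟩
  have hreflect := (hsol.comp_reflect hp).congr_potential <| by
    filter_upwards [hqeven] with x hx
    rw [zero_add, ← hx]
  have hu := (hreflect.sub hp (hsol.const_mul (y 1))).eqOn_zero hp (by simp [h0])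
    (by simp [h0', h1]) (right_mem_Icc.2 zero_le_one)
  simp only [Pi.sub_apply, zero_add, sub_self, h0, Pi.zero_apply, sub_eq_zero] at hu
  linear_combination -hu
end
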